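/- Let z₀ ∈ (0,1) and s ∈ (0, 1 − z₀). Then the Euclidean disk B²(z₀, s) = {z ∈ ℂ : |z − z₀| < s} is contained in the Hilbert disk B_h(z₀, ρ(z₀, z₀ + s)), where ρ is the hyperbolic metric and h is the Hilbert metric of the unit disk. -/

import Mathlib

/-!
Write the chord through `a` and `b` as `u, a, b, v` in this order, with `α = |u - a|`,
`β = |a - b|`, `γ = |b - v|`. The power of a point gives `1 - |a|² = α (β + γ)` and
`1 - |b|² = (α + β) γ`, and then a direct computation shows
`sinh (h(a, b) / 2) = (|u - v| / 2) · sinh (ρ(a, b) / 2)`. As a chord has length `|u - v| ≤ 2`,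
`h ≤ ρ` on the disk. Finally `ρ(z₀, z) < ρ(z₀, z₀ + s)` when `|z - z₀| < s`: the numerator
`|z - z₀|` of `sinh (ρ / 2)` is smaller, and `|z| ≤ z₀ + |z - z₀|` makes its denominator larger.
-/

open Complex ComplexConjugate

/-- The line through two points `a`, `b` in the complex plane. -/
noncomputable def lineThrough (a b : ℂ) : Set ℂ :=
  {z : ℂ | ∃ t : ℝ, z = a + (t : ℂ) * (b - a)}

/-- The Hilbert metric of the unit disk: for `a ≠ b`,
`h(a,b) = log (|u-b||a-v| / (|u-a||b-v|))` where `u, v` are the intersection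
points of the line through `a, b` with the unit circle, ordered so that
`|u-a| < |u-b|` (equivalently `|v-b| < |v-a|`). For `a = b` the defining set
is empty and `sSup ∅ = 0`. -/
noncomputable def hilbertDist (a b : ℂ) : ℝ :=
  sSup { d : ℝ | ∃ u v : ℂ, ‖u‖ = 1 ∧ ‖v‖ = 1 ∧
    u ∈ lineThrough a b ∧ v ∈ lineThrough a b ∧
    dist u a < dist u b ∧ dist v b < dist v a ∧
    d = Real.log ((dist u b * dist a v) / (dist u a * dist b v)) }

/-- The hyperbolic (Poincaré) metric of the unit disk, defined by
`sinh (ρ(a,b)/2) = |a-b| / √((1-|a|²)(1-|b|²))`. -/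
noncomputable def rhoDist (a b : ℂ) : ℝ :=
  2 * Real.arsinh (‖a - b‖ /
    Real.sqrt ((1 - ‖a‖ ^ 2) * (1 - ‖b‖ ^ 2)))

/-- The visual angle metric of the unit disk:
`v(a,b) = sup {∠(a,z,b) : z ∈ ∂𝔹²}`. -/
noncomputable def visualAngle (a b : ℂ) : ℝ :=
  sSup { α : ℝ | ∃ z : ℂ, ‖z‖ = 1 ∧ α = EuclideanGeometry.angle a z b }

/-- Euclidean distance from the origin to the line through `a` and `b`. -/
noncomputable def distToLine (a b : ℂ) : ℝ := Metric.infDist 0 (lineThrough a b)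

/-- The Hilbert disk `B_h(z₀, t)`. -/
noncomputable def hilbertBall (z₀ : ℂ) (t : ℝ) : Set ℂ :=
  {z : ℂ | ‖z‖ < 1 ∧ hilbertDist z₀ z < t}

/-- The hyperbolic disk `B_ρ(z₀, t)`. -/
noncomputable def rhoBall (z₀ : ℂ) (t : ℝ) : Set ℂ :=
  {z : ℂ | ‖z‖ < 1 ∧ rhoDist z₀ z < t}

section Chord

variable {E : Type*} [NormedAddCommGroup E] [InnerProductSpace ℝ E]

theorem norm_add_smul_sq (a c : E) (t : ℝ) :
    ‖a + t • c‖ ^ 2 = ‖a‖ ^ 2 + 2 * t * inner ℝ a c + t ^ 2 * ‖c‖ ^ 2 := by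
  rw [norm_add_sq_real, norm_smul, real_inner_smul_right, mul_pow, Real.norm_eq_abs, sq_abs]
  ring

theorem mul_mul_norm_sq_eq_of_norm_add_smul_eq {a c : E} {r s t : ℝ} (hst : s ≠ t)
    (hs : ‖a + s • c‖ = r) (ht : ‖a + t • c‖ = r) :
    s * t * ‖c‖ ^ 2 = ‖a‖ ^ 2 - r ^ 2 := by
  have hs' := norm_add_smul_sq a c s
  have ht' := norm_add_smul_sq a c t
  rw [hs] at hs'
  rw [ht] at ht'
  have hinner : 2 * inner ℝ a c + (s + t) * ‖c‖ ^ 2 = 0 := by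
    have h : (s - t) * (2 * inner ℝ a c + (s + t) * ‖c‖ ^ 2) = 0 := by
      linear_combination ht' - hs'
    exact (mul_eq_zero.mp h).resolve_left (sub_ne_zero.mpr hst)
  linear_combination hs' + s * hinner

theorem sub_one_mul_sub_one_mul_norm_sq_eq_of_norm_add_smul_eq {a c : E} {r s t : ℝ}
    (hst : s ≠ t) (hs : ‖a + s • c‖ = r) (ht : ‖a + t • c‖ = r) :
    (s - 1) * (t - 1) * ‖c‖ ^ 2 = ‖a + c‖ ^ 2 - r ^ 2 := by
  have hshift : ∀ x : ℝ, a + x • c = (a + c) + (x - 1) • c := fun x => by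
    rw [sub_smul, one_smul]
    abel
  rw [hshift] at hs ht
  exact mul_mul_norm_sq_eq_of_norm_add_smul_eq (sub_left_injective.ne hst) hs ht

theorem dist_add_smul_add_smul (a c : E) (s t : ℝ) :
    dist (a + s • c) (a + t • c) = |s - t| * ‖c‖ := by
  rw [dist_eq_norm, add_sub_add_left_eq_sub, ← sub_smul, norm_smul, Real.norm_eq_abs]

/-- A chord through two interior points `a`, `a + c` leaves the ball on both sides of them. -/
theorem neg_and_one_lt_of_norm_add_smul_eq {a c : E} {r s t : ℝ} (ha : ‖a‖ < r)
    (hb : ‖a + c‖ < r) (hst : s ≠ t) (hs : ‖a + s • c‖ = r) (ht : ‖a + t • c‖ = r)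
    (hsa : dist (a + s • c) a < dist (a + s • c) (a + c)) : s < 0 ∧ 1 < t := by
  have hsign_a : s * t < 0 := by
    refine neg_of_mul_neg_left ?_ (sq_nonneg ‖c‖)
    rw [mul_mul_norm_sq_eq_of_norm_add_smul_eq hst hs ht]
    nlinarith [norm_nonneg a]
  have hsign_b : (s - 1) * (t - 1) < 0 := by
    refine neg_of_mul_neg_left ?_ (sq_nonneg ‖c‖)
    rw [sub_one_mul_sub_one_mul_norm_sq_eq_of_norm_add_smul_eq hst hs ht]
    nlinarith [norm_nonneg (a + c)]
  have hs_half : |s| < |s - 1| := by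
    have h := dist_add_smul_add_smul a c s 1
    rw [one_smul] at h
    rw [h, dist_self_add_left, norm_smul, Real.norm_eq_abs] at hsa
    exact lt_of_mul_lt_mul_right hsa (norm_nonneg c)
  have hs : s < 0 := by nlinarith [sq_lt_sq.mpr hs_half]
  exact ⟨hs, by nlinarith⟩

end Chord

theorem sinh_half_log_cross_ratio {α β γ : ℝ} (hα : 0 < α) (hβ : 0 ≤ β) (hγ : 0 < γ) :
    Real.sinh (Real.log ((α + β) * (β + γ) / (α * γ)) / 2) =
      (α + β + γ) / 2 * (β / √(α * (β + γ) * ((α + β) * γ))) := by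
  set P := √((α + β) * (β + γ))
  set Q := √(α * γ)
  have hP : 0 < P := Real.sqrt_pos.mpr (by positivity)
  have hQ : 0 < Q := Real.sqrt_pos.mpr (by positivity)
  have hPQ : √(α * (β + γ) * ((α + β) * γ)) = P * Q := by
    rw [← Real.sqrt_mul (by positivity)]
    ring_nf
  rw [← Real.log_sqrt (by positivity), Real.sqrt_div (by positivity), Real.sinh_log (by positivity),
    hPQ]
  field_simp
  rw [Real.sq_sqrt (by positivity), Real.sq_sqrt (by positivity)]
  ring

theorem log_cross_ratio_le_two_mul_arsinh {α β γ : ℝ} (hα : 0 < α) (hβ : 0 ≤ β) (hγ : 0 < γ)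
    (hchord : α + β + γ ≤ 2) :
    Real.log ((α + β) * (β + γ) / (α * γ)) ≤
      2 * Real.arsinh (β / √(α * (β + γ) * ((α + β) * γ))) := by
  rw [← div_le_iff₀' two_pos, ← Real.arsinh_sinh (_ / 2), Real.arsinh_le_arsinh,
    sinh_half_log_cross_ratio hα hβ hγ]
  exact mul_le_of_le_one_left (by positivity) (by linarith)

theorem rhoDist_nonneg (a b : ℂ) : 0 ≤ rhoDist a b :=
  mul_nonneg zero_le_two (Real.arsinh_nonneg_iff.mpr (by positivity))

theorem rhoDist_lt_rhoDist {a b z : ℂ} (ha : ‖a‖ < 1) (hb : ‖b‖ < 1) (hzb : ‖z‖ ≤ ‖b‖)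
    (hab : ‖a - z‖ < ‖a - b‖) : rhoDist a z < rhoDist a b := by
  have hA : 0 < 1 - ‖a‖ ^ 2 := by nlinarith [norm_nonneg a]
  have hB : 0 < 1 - ‖b‖ ^ 2 := by nlinarith [norm_nonneg b]
  unfold rhoDist
  gcongr 2 * ?_
  refine Real.arsinh_lt_arsinh.mpr ?_
  gcongr

theorem log_cross_ratio_le_rhoDist {a b u v : ℂ} (ha : ‖a‖ < 1) (hb : ‖b‖ < 1)
    (hu : ‖u‖ = 1) (hv : ‖v‖ = 1) (hul : u ∈ lineThrough a b) (hvl : v ∈ lineThrough a b)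
    (hua : dist u a < dist u b) (hvb : dist v b < dist v a) :
    Real.log (dist u b * dist a v / (dist u a * dist b v)) ≤ rhoDist a b := by
  obtain ⟨c, rfl⟩ : ∃ c, b = a + c := ⟨b - a, by ring⟩
  obtain ⟨s, rfl⟩ := hul
  obtain ⟨t, rfl⟩ := hvl
  simp only [add_sub_cancel_left, ← Complex.real_smul] at *
  have hst : s ≠ t := by
    rintro rfl
    exact lt_asymm hua (by rwa [dist_comm, dist_comm (a + c)] at hvb)
  have hdist : ∀ x y : ℝ, dist (a + x • c) (a + y • c) = |x - y| * ‖c‖ :=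
    dist_add_smul_add_smul a c
  obtain ⟨hs, ht⟩ := neg_and_one_lt_of_norm_add_smul_eq ha hb hst hu hv hua
  have hc : 0 < ‖c‖ := norm_pos_iff.mpr (by rintro rfl; simp at hu; linarith)
  have dua : dist (a + s • c) a = -s * ‖c‖ := by
    rw [dist_self_add_left, norm_smul, Real.norm_eq_abs, abs_of_neg hs]
  have dub : dist (a + s • c) (a + c) = -s * ‖c‖ + ‖c‖ := by
    have h := hdist s 1
    rw [one_smul, abs_of_neg (by linarith : s - 1 < 0)] at h
    linear_combination h
  have dav : dist a (a + t • c) = ‖c‖ + (t - 1) * ‖c‖ := by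
    have h := hdist 0 t
    rw [zero_smul, add_zero, abs_of_neg (by linarith : 0 - t < 0)] at h
    linear_combination h
  have dbv : dist (a + c) (a + t • c) = (t - 1) * ‖c‖ := by
    have h := hdist 1 t
    rw [one_smul, abs_of_neg (by linarith : 1 - t < 0)] at h
    linear_combination h
  have hA : 1 - ‖a‖ ^ 2 = -s * ‖c‖ * (‖c‖ + (t - 1) * ‖c‖) := by
    linear_combination mul_mul_norm_sq_eq_of_norm_add_smul_eq hst hu hv
  have hB : 1 - ‖a + c‖ ^ 2 = (-s * ‖c‖ + ‖c‖) * ((t - 1) * ‖c‖) := by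
    linear_combination sub_one_mul_sub_one_mul_norm_sq_eq_of_norm_add_smul_eq hst hu hv
  have hchord : -s * ‖c‖ + ‖c‖ + (t - 1) * ‖c‖ ≤ 2 := by
    have h := dist_le_norm_add_norm (a + t • c) (a + s • c)
    rw [hdist, abs_of_pos (by linarith : 0 < t - s), hu, hv] at h
    linarith
  unfold rhoDist
  rw [dua, dub, dav, dbv, hA, hB, norm_sub_rev, add_sub_cancel_left]
  exact log_cross_ratio_le_two_mul_arsinh (by nlinarith) hc.le (by nlinarith) hchord

theorem hilbertDist_le_rhoDist {a b : ℂ} (ha : ‖a‖ < 1) (hb : ‖b‖ < 1) :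
    hilbertDist a b ≤ rhoDist a b := by
  refine Real.sSup_le ?_ (rhoDist_nonneg a b)
  rintro _ ⟨u, v, hu, hv, hul, hvl, hua, hvb, rfl⟩
  exact log_cross_ratio_le_rhoDist ha hb hu hv hul hvl hua hvb

theorem euclidean_ball_subset_hilbert_ball_general (z₀ s : ℝ)
    (h₁ : 0 < z₀) (hs₂ : s < 1 - z₀) :
    Metric.ball (z₀ : ℂ) s ⊆
      hilbertBall (z₀ : ℂ) (rhoDist (z₀ : ℂ) ((z₀ + s : ℝ) : ℂ)) := by
  intro z hz
  have hs : 0 < s := Metric.pos_of_mem_ball hz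
  have hz₀ : ‖(z₀ : ℂ)‖ = z₀ := by simp [h₁.le]
  have hb : ‖((z₀ + s : ℝ) : ℂ)‖ = z₀ + s := by
    rw [Complex.norm_real, Real.norm_of_nonneg (by linarith)]
  have hz₀b : ‖(z₀ : ℂ) - ((z₀ + s : ℝ) : ℂ)‖ = s := by
    push_cast
    simp [hs.le]
  have hzb : ‖z‖ < z₀ + s :=
    calc ‖z‖ ≤ ‖(z₀ : ℂ)‖ + ‖z - z₀‖ := norm_le_norm_add_norm_sub' z z₀
      _ < z₀ + s := by rw [hz₀, ← dist_eq_norm]; linarith [Metric.mem_ball.mp hz]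
  have hz_disk : ‖z‖ < 1 := by linarith
  refine ⟨hz_disk, (hilbertDist_le_rhoDist (by linarith) hz_disk).trans_lt ?_⟩
  refine rhoDist_lt_rhoDist (by linarith) (by linarith) (by linarith) ?_
  rwa [hz₀b, ← dist_eq_norm, dist_comm]

/-- For `z₀ ∈ (0,1)` and `s ∈ (0, 1-z₀)`, the Euclidean disk `B²(z₀,s)` is
contained in the Hilbert disk `B_h(z₀, ρ(z₀, z₀+s))`. -/
theorem euclidean_ball_subset_hilbert_ball (z₀ s : ℝ)
    (h₁ : 0 < z₀) (h₂ : z₀ < 1) (hs₁ : 0 < s) (hs₂ : s < 1 - z₀) :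
    Metric.ball (z₀ : ℂ) s ⊆
      hilbertBall (z₀ : ℂ) (rhoDist (z₀ : ℂ) ((z₀ + s : ℝ) : ℂ)) :=
  euclidean_ball_subset_hilbert_ball_general z₀ s h₁ hs₂
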